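/- Fix ρ ∈ (0,1). Define h(z) = (1 − (1−4ρ)z − (2ρ²+2ρ+1)z² − (1−2ρ)z³)/(8(1−z)) for z ∈ [0, ρ]. Then h is non-decreasing on [0, ρ], and sup_{z∈[0,ρ]} h(z) = h(ρ) = (1/2)((1+ρ)/2)³ + (1/2)((1−ρ)/2)³. -/

import Mathlib

noncomputable def h (ρ z : ℝ) : ℝ :=
  (1 - (1 - 4 * ρ) * z - (2 * ρ ^ 2 + 2 * ρ + 1) * z ^ 2 - (1 - 2 * ρ) * z ^ 3) /
    (8 * (1 - z))

lemma h_hasDerivAt (ρ z : ℝ) (hz : z ≠ 1) :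
    HasDerivAt (h ρ)
      (((-(1 - 4 * ρ) - (2 * ρ ^ 2 + 2 * ρ + 1) * (2 * z) - (1 - 2 * ρ) * (3 * z ^ 2)) *
          (8 * (1 - z)) -
          (1 - (1 - 4 * ρ) * z - (2 * ρ ^ 2 + 2 * ρ + 1) * z ^ 2 - (1 - 2 * ρ) * z ^ 3) * (-8)) /
        (8 * (1 - z)) ^ 2) z := by
  have hnum : HasDerivAt
      (fun z : ℝ => 1 - (1 - 4 * ρ) * z - (2 * ρ ^ 2 + 2 * ρ + 1) * z ^ 2 - (1 - 2 * ρ) * z ^ 3)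
      (-(1 - 4 * ρ) - (2 * ρ ^ 2 + 2 * ρ + 1) * (2 * z) - (1 - 2 * ρ) * (3 * z ^ 2)) z := by
    have h1 : HasDerivAt (fun z : ℝ => z) 1 z := hasDerivAt_id z
    have h2 : HasDerivAt (fun z : ℝ => z ^ 2) (2 * z) z := by
      simpa using hasDerivAt_pow 2 z
    have h3 : HasDerivAt (fun z : ℝ => z ^ 3) (3 * z ^ 2) z := by
      simpa using hasDerivAt_pow 3 z
    have := (((hasDerivAt_const z (1 : ℝ)).sub (h1.const_mul (1 - 4 * ρ))).sub
        (h2.const_mul (2 * ρ ^ 2 + 2 * ρ + 1))).sub (h3.const_mul (1 - 2 * ρ))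
    exact this.congr_deriv (by ring)
  have hden : HasDerivAt (fun z : ℝ => 8 * (1 - z)) (-8) z := by
    have := ((hasDerivAt_const z (1 : ℝ)).sub (hasDerivAt_id z)).const_mul (8 : ℝ)
    exact this.congr_deriv (by ring)
  exact hnum.div hden (by intro hc; apply hz; nlinarith [hc])

/-- For `ρ ∈ (0,1)`, `h` is non-decreasing on `[0, ρ]`, and its supremum there is
`h(ρ) = (1/2)((1+ρ)/2)³ + (1/2)((1−ρ)/2)³`. -/
theorem stmt10 (ρ : ℝ) (hρ : ρ ∈ Set.Ioo (0 : ℝ) 1) :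
    MonotoneOn (h ρ) (Set.Icc 0 ρ) ∧
    (∀ z ∈ Set.Icc (0 : ℝ) ρ, h ρ z ≤ h ρ ρ) ∧
    h ρ ρ = (1 / 2) * ((1 + ρ) / 2) ^ 3 + (1 / 2) * ((1 - ρ) / 2) ^ 3 := by
  obtain ⟨hρ0, hρ1⟩ := hρ
  have hmono : MonotoneOn (h ρ) (Set.Icc 0 ρ) := by
    apply monotoneOn_of_deriv_nonneg (convex_Icc 0 ρ)
    · apply ContinuousOn.div
      · fun_prop
      · fun_prop
      · intro z hz
        have : z < 1 := lt_of_le_of_lt hz.2 hρ1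
        intro hc
        nlinarith [hc]
    · intro z hz
      rw [interior_Icc] at hz
      have hz1 : z ≠ 1 := ne_of_lt (lt_trans hz.2 hρ1)
      exact (h_hasDerivAt ρ z hz1).differentiableAt.differentiableWithinAt
    · intro z hz
      rw [interior_Icc] at hz
      have hz1 : z < 1 := lt_trans hz.2 hρ1
      rw [(h_hasDerivAt ρ z (ne_of_lt hz1)).deriv]
      apply div_nonneg _ (sq_nonneg _)
      have h0 : 0 ≤ z := hz.1.le
      have hzρ : z ≤ ρ := hz.2.le
      nlinarith [mul_nonneg (sub_nonneg.2 hzρ) h0, mul_pos (sub_pos.2 hρ1) hρ0,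
        mul_nonneg (mul_nonneg (sub_nonneg.2 hzρ) h0) h0,
        mul_nonneg (mul_nonneg (sub_nonneg.2 hzρ) (sub_nonneg.2 hρ1.le)) (sub_nonneg.2 hρ1.le),
        sq_nonneg (1 - z), sq_nonneg (ρ - z), sq_nonneg z,
        mul_nonneg (sub_nonneg.2 hzρ) (sq_nonneg (1 - ρ)),
        mul_nonneg h0 (sq_nonneg (1 - ρ))]
  refine ⟨hmono, fun z hz => hmono hz (Set.mem_Icc.2 ⟨hρ0.le, le_refl ρ⟩) hz.2, ?_⟩
  have hden : (8 : ℝ) * (1 - ρ) ≠ 0 := by nlinarith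
  unfold h
  field_simp
  ring
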